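/- For n ≥ 2 there exists a nonnegative continuous compactly supported function g on SL_n(ℝ) such that ∫_{SL_n(ℝ)} |det(I − q)|⁻¹ g(q) dq = ∞. -/

import Mathlib

open MeasureTheory Matrix

/-- `SL_n(ℝ)` with the topology induced from the space of matrices. -/
instance SLtop (n : ℕ) : TopologicalSpace (Matrix.SpecialLinearGroup (Fin n) ℝ) :=
  TopologicalSpace.induced (fun q => (q : Matrix (Fin n) (Fin n) ℝ)) inferInstance

/-!
Let `u s = 1 + s • E_{last,0}` be the transvections in `SL_n(ℝ)`. Only the last row of
`1 - u s * q` depends on `s`, so `s ↦ det (1 - u s * q)` is affine, with slope `-D q` for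
a cofactor-type determinant `D`. For `q₀ = 1 - N`, `N` the nilpotent shift, `det (1 - q₀) = 0`
while `D q₀ = ±1`; hence on a compact neighbourhood `K` of `q₀` the affine function vanishes
somewhere in `[-1, 1]`, and `s ↦ |det (1 - u s * q)|⁻¹` is not integrable over `[-1, 1]`.
Take `g = 1` on `u([-1, 1]) K`. Integrating the left-invariant integral over the translates
by `u s`, `s ∈ [-1, 1]`, and swapping the integrals (Tonelli) gives
`2 ∫ |det (1 - q)|⁻¹ g(q) dμ ≥ ∫_K ∞ dμ = ∞`.
-/

open Set
open scoped ENNReal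

theorem lintegral_inv_abs_sub_eq_top {a b c : ℝ} (hab : a < b) (hc : c ∈ Icc a b) :
    ∫⁻ x in Icc a b, (ENNReal.ofReal |x - c|)⁻¹ = ∞ := by
  by_contra hfin
  have hint : IntervalIntegrable (fun x => (x - c)⁻¹) volume a b := by
    refine (intervalIntegrable_iff_integrableOn_Icc_of_le hab.le).2
      ⟨by fun_prop, lt_of_le_of_lt (lintegral_mono fun x => ?_) (lt_top_iff_ne_top.2 hfin)⟩
    rcases eq_or_ne (x - c) 0 with hx | hx
    · simp [hx]
    · rw [enorm_inv hx, Real.enorm_eq_ofReal_abs]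
  rw [intervalIntegrable_sub_inv_iff, uIcc_of_le hab.le] at hint
  exact hint.elim hab.ne fun h => h hc

theorem lintegral_inv_abs_sub_mul_eq_top {a b : ℝ} (h : |a| < |b|) :
    ∫⁻ x in Icc (-1 : ℝ) 1, (ENNReal.ofReal |a - x * b|)⁻¹ = ∞ := by
  have hb : b ≠ 0 := abs_pos.1 ((abs_nonneg a).trans_lt h)
  have hc : a / b ∈ Icc (-1 : ℝ) 1 := by
    rw [mem_Icc, ← abs_le, abs_div, div_le_one (abs_pos.2 hb)]
    exact h.le
  have hsplit : ∀ x : ℝ, (ENNReal.ofReal |a - x * b|)⁻¹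
      = (ENNReal.ofReal |b|)⁻¹ * (ENNReal.ofReal |x - a / b|)⁻¹ := fun x => by
    rw [← ENNReal.mul_inv (.inr ENNReal.ofReal_ne_top) (.inl ENNReal.ofReal_ne_top),
      ← ENNReal.ofReal_mul (abs_nonneg b), ← abs_mul, mul_sub, mul_div_cancel₀ a hb,
      ← abs_neg]
    ring_nf
  simp_rw [hsplit]
  rw [lintegral_const_mul' _ _ (ENNReal.inv_ne_top.2 (ENNReal.ofReal_pos.2 (abs_pos.2 hb)).ne'),
    lintegral_inv_abs_sub_eq_top (by norm_num) hc, ENNReal.mul_top]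
  exact ENNReal.inv_ne_zero.2 ENNReal.ofReal_ne_top

theorem lintegral_eq_top_of_forall_lintegral_comp_mul_eq_top {X G : Type*} [MeasurableSpace X]
    [Group G] [MeasurableSpace G] [MeasurableMul G] {μ : Measure G} [μ.IsMulLeftInvariant]
    {ν : Measure X} [IsFiniteMeasure ν] {u : X → G} (hu : Measurable fun p : X × G => u p.1 * p.2)
    {F : G → ℝ≥0∞} (hF : Measurable F) {K : Set G} (hKm : MeasurableSet K) (hK₀ : μ K ≠ 0)
    (hK : μ K ≠ ∞) (htop : ∀ q ∈ K, ∫⁻ x, F (u x * q) ∂ν = ∞) :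
    ∫⁻ q, F q ∂μ = ∞ := by
  have : Fact (μ K < ∞) := ⟨hK.lt_top⟩
  have hle : ∞ ≤ ν univ * ∫⁻ q, F q ∂μ :=
    calc ∞ = ∫⁻ q in K, ∫⁻ x, F (u x * q) ∂ν ∂μ := by
          rw [setLIntegral_congr_fun hKm htop, setLIntegral_const, ENNReal.top_mul hK₀]
      _ = ∫⁻ x, ∫⁻ q in K, F (u x * q) ∂μ ∂ν :=
          (lintegral_lintegral_swap (f := fun x q => F (u x * q)) (hF.comp hu).aemeasurable).symm
      _ ≤ ∫⁻ x, ∫⁻ q, F (u x * q) ∂μ ∂ν := lintegral_mono fun x => setLIntegral_le_lintegral _ _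
      _ = ν univ * ∫⁻ q, F q ∂μ := by
          simp_rw [lintegral_mul_left_eq_self, lintegral_const, mul_comm]
  by_contra hfin
  exact ENNReal.mul_ne_top (measure_ne_top ν univ) hfin (top_le_iff.1 hle)

theorem det_one_sub_transvection_mul {n R : Type*} [Fintype n] [DecidableEq n] [CommRing R]
    (M : Matrix n n R) (i j : n) (c : R) :
    det (1 - transvection i j c * M) = det (1 - M) - c * det (updateRow (1 - M) i (M j)) := by
  have hrow : 1 - transvection i j c * M = updateRow (1 - M) i ((1 - M) i + (-c) • M j) := by
    ext a b
    rcases eq_or_ne a i with rfl | ha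
    · simp only [Matrix.sub_apply, updateRow_self, Pi.add_apply, Pi.smul_apply, smul_eq_mul,
        transvection_mul_apply_same]
      ring
    · simp [ha]
  rw [hrow, det_updateRow_add, updateRow_eq_self, det_updateRow_smul]
  ring

def shiftMatrix (m : ℕ) (R : Type*) [Zero R] [One R] : Matrix (Fin m) (Fin m) R :=
  of fun i j => if (j : ℕ) = i + 1 then 1 else 0

section shiftMatrix

variable {R : Type*} [CommRing R] {m : ℕ}

theorem det_one_sub_shiftMatrix : det (1 - shiftMatrix m R) = 1 := by
  have : (1 - shiftMatrix m R).BlockTriangular id := fun i j (hji : j < i) => by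
    simp [shiftMatrix, hji.ne']
    omega
  rw [det_of_isUpperTriangular this]
  simp [shiftMatrix]

theorem det_shiftMatrix : det (shiftMatrix (m + 1) R) = 0 :=
  det_eq_zero_of_column_eq_zero 0 fun i => by simp [shiftMatrix]

theorem det_updateRow_shiftMatrix_last :
    det (updateRow (shiftMatrix (m + 2) R) (Fin.last (m + 1)) ((1 - shiftMatrix (m + 2) R) 0))
      = (-1) ^ (m + 1) := by
  rw [det_succ_column_zero, Finset.sum_eq_single (Fin.last (m + 1))]
  · have : (updateRow (shiftMatrix (m + 2) R) (Fin.last (m + 1))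
        ((1 - shiftMatrix (m + 2) R) 0)).submatrix (Fin.last (m + 1)).succAbove Fin.succ = 1 := by
      ext i j
      simp [shiftMatrix, one_apply, Fin.ext_iff, (Fin.castSucc_lt_last i).ne, eq_comm]
    rw [this, det_one]
    simp [shiftMatrix]
  · intro i _ hi
    simp [hi, shiftMatrix]
  · simp

end shiftMatrix

namespace Matrix.SpecialLinearGroup

variable {n : ℕ}

instance : IsTopologicalGroup (SpecialLinearGroup (Fin n) ℝ) := topologicalGroup

instance : T1Space (SpecialLinearGroup (Fin n) ℝ) := instT1Space

instance : LocallyCompactSpace (SpecialLinearGroup (Fin n) ℝ) :=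
  have : LocallyCompactSpace (Matrix (Fin n) (Fin n) ℝ) :=
    inferInstanceAs (LocallyCompactSpace (Fin n → Fin n → ℝ))
  isClosedEmbedding_val.locallyCompactSpace

@[fun_prop]
theorem continuous_transvection {i j : Fin n} (hij : i ≠ j) :
    Continuous (transvection hij : ℝ → SpecialLinearGroup (Fin n) ℝ) :=
  continuous_induced_rng.2 <|
    ((continuous_const (y := (1 : Matrix (Fin n) (Fin n) ℝ))).add
      (continuous_id.smul (continuous_const (y := single i j (1 : ℝ))))).congr
    fun c => by simp [transvection_coe, smul_single]

theorem abs_det_one_sub_lt_of_eq_one_sub_shiftMatrix {m : ℕ}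
    {q : SpecialLinearGroup (Fin (m + 2)) ℝ} (hq : q.1 = 1 - shiftMatrix (m + 2) ℝ) :
    |det (1 - q.1)| < |det (updateRow (1 - q.1) (Fin.last (m + 1)) (q 0))| := by
  simp [hq, det_shiftMatrix, det_updateRow_shiftMatrix_last]

variable [MeasurableSpace (SpecialLinearGroup (Fin n) ℝ)]
  [BorelSpace (SpecialLinearGroup (Fin n) ℝ)] (μ : Measure (SpecialLinearGroup (Fin n) ℝ))
  [μ.IsHaarMeasure] {i j : Fin n}

theorem lintegral_inv_abs_det_one_sub_mul_eq_top (hij : i ≠ j)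
    {K : Set (SpecialLinearGroup (Fin n) ℝ)} (hKc : IsCompact K) (hK₀ : μ K ≠ 0)
    (hK : ∀ q ∈ K, |det (1 - q.1)| < |det (updateRow (1 - q.1) i (q j))|)
    {g : SpecialLinearGroup (Fin n) ℝ → ℝ} (hg : Measurable g)
    (hgK : EqOn g 1 ((fun p : ℝ × _ => transvection hij p.1 * p.2) '' Icc (-1 : ℝ) 1 ×ˢ K)) :
    ∫⁻ q, (ENNReal.ofReal |det (1 - q.1)|)⁻¹ * ENNReal.ofReal (g q) ∂μ = ∞ := by
  have hu : Continuous fun p : ℝ × SpecialLinearGroup (Fin n) ℝ => transvection hij p.1 * p.2 := by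
    fun_prop
  have hφ : Continuous fun q : SpecialLinearGroup (Fin n) ℝ => det (1 - q.1) := by fun_prop
  have hF := hφ.abs.measurable.ennreal_ofReal.inv.mul hg.ennreal_ofReal
  refine lintegral_eq_top_of_forall_lintegral_comp_mul_eq_top
    (ν := volume.restrict (Icc (-1 : ℝ) 1)) hu.measurable hF hKc.measurableSet hK₀
    hKc.measure_lt_top.ne fun q hq => top_unique ?_
  calc ∞ = ∫⁻ s in Icc (-1 : ℝ) 1,
          (ENNReal.ofReal |det (1 - q.1) - s * det (updateRow (1 - q.1) i (q j))|)⁻¹ :=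
        (lintegral_inv_abs_sub_mul_eq_top (hK q hq)).symm
    _ ≤ _ := by
        refine setLIntegral_mono (hF.comp (hu.comp (Continuous.prodMk_left q)).measurable)
          fun s hs => ?_
        rw [hgK ⟨(s, q), ⟨hs, hq⟩, rfl⟩, Pi.one_apply, ENNReal.ofReal_one, mul_one,
          ← det_one_sub_transvection_mul]
        rfl

theorem exists_lintegral_inv_abs_det_one_sub_mul_eq_top (hij : i ≠ j)
    {q₀ : SpecialLinearGroup (Fin n) ℝ}
    (hq₀ : |det (1 - q₀.1)| < |det (updateRow (1 - q₀.1) i (q₀ j))|) :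
    ∃ g : SpecialLinearGroup (Fin n) ℝ → ℝ, Continuous g ∧ HasCompactSupport g ∧ (∀ q, 0 ≤ g q) ∧
      ∫⁻ q, (ENNReal.ofReal |det (1 - q.1)|)⁻¹ * ENNReal.ofReal (g q) ∂μ = ∞ := by
  have hopen : IsOpen {q : SpecialLinearGroup (Fin n) ℝ |
      |det (1 - q.1)| < |det (updateRow (1 - q.1) i (q j))|} :=
    isOpen_lt (by fun_prop) (by fun_prop)
  obtain ⟨K, hK, hKU, hKc⟩ := local_compact_nhds (hopen.mem_nhds hq₀)
  obtain ⟨g, hgK, -, hgc, hg01⟩ := exists_continuous_one_zero_of_isCompact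
    ((isCompact_Icc.prod hKc).image (by fun_prop : Continuous fun p : ℝ × _ =>
      transvection hij p.1 * p.2)) isClosed_empty (disjoint_empty _)
  exact ⟨g, g.continuous, hgc, fun q => (hg01 q).1, lintegral_inv_abs_det_one_sub_mul_eq_top μ hij
    hKc (μ.measure_pos_of_mem_nhds hK).ne' hKU g.continuous.measurable hgK⟩

end Matrix.SpecialLinearGroup

open Matrix.SpecialLinearGroup

/-- For `n ≥ 2` there exists a nonnegative continuous compactly supported function `g`
on `SL_n(ℝ)` such that `∫_{SL_n(ℝ)} |det(I − q)|⁻¹ g(q) dq = ∞` with respect to Haar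
measure. -/
theorem exists_g_lintegral_det_inv_eq_top
    (n : ℕ) (hn : 2 ≤ n) [MeasurableSpace (Matrix.SpecialLinearGroup (Fin n) ℝ)]
    [BorelSpace (Matrix.SpecialLinearGroup (Fin n) ℝ)]
    (μ : Measure (Matrix.SpecialLinearGroup (Fin n) ℝ)) [μ.IsHaarMeasure] :
    ∃ g : Matrix.SpecialLinearGroup (Fin n) ℝ → ℝ,
      Continuous g ∧ HasCompactSupport g ∧ (∀ q, 0 ≤ g q) ∧
        ∫⁻ q, (ENNReal.ofReal |((1 : Matrix (Fin n) (Fin n) ℝ)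
            - (q : Matrix (Fin n) (Fin n) ℝ)).det|)⁻¹ * ENNReal.ofReal (g q) ∂μ = ⊤ := by
  obtain ⟨m, rfl⟩ : ∃ m, n = m + 2 := ⟨n - 2, by omega⟩
  let q₀ : SpecialLinearGroup (Fin (m + 2)) ℝ :=
    ⟨1 - shiftMatrix (m + 2) ℝ, det_one_sub_shiftMatrix⟩
  exact exists_lintegral_inv_abs_det_one_sub_mul_eq_top μ Fin.last_pos.ne'
    (abs_det_one_sub_lt_of_eq_one_sub_shiftMatrix (q := q₀) rfl)
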